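/- Strong confluence in Milner's CCS is not preserved by parallel composition with restriction: the CCS processes R1 = r̄.a.0, S ≝ r.S, and R2 = r̄.b.0 are each strongly confluent, but P = (R1 ∥ S ∥ R2)↾{r} is not strongly confluent; in fact P is not even determinate modulo strong bisimilarity, since P has two τ-transitions, to Q1 = (a.0 ∥ S ∥ r̄.b.0)↾{r} and to Q2 = (r̄.a.0 ∥ S ∥ b.0)↾{r}, with Q1 ≁ Q2. -/

import Mathlib

namespace CCSlm

/-- Labels 𝓛 = R ∪ {σ}: channel names with polarity (rendezvous actions) plus the single clock σ. -/
inductive Label (Name : Type) : Type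
  | pos : Name → Label Name
  | neg : Name → Label Name
  | clock : Label Name

/-- Complementation ℓ ↦ ℓ̄ (an involution, with σ̄ = σ). -/
def Label.bar {Name : Type} : Label Name → Label Name
  | .pos a => .neg a
  | .neg a => .pos a
  | .clock => .clock

/-- Actions Act = 𝓛 ∪ {τ}. -/
inductive Act (Name : Type) : Type
  | lab : Label Name → Act Name
  | tau : Act Name

/-- The (at most one) label of an action, as a set. -/
def Act.labels {Name : Type} : Act Name → Set (Label Name)
  | .lab ℓ => {ℓ}
  | .tau => ∅

/-- α ∈ R (α is a rendezvous action). -/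
def Act.isRendezvous {Name : Type} : Act Name → Prop
  | .lab .clock => False
  | .tau => False
  | .lab _ => True

/-- α ∈ R ∪ {τ}. -/
def Act.isRendezvousOrTau {Name : Type} : Act Name → Prop
  | .lab .clock => False
  | _ => True

/-- Clock horizons H = {⊥,⊤}, as `Bool` (`false` = ⊥ = ∅, `true` = ⊤ = {σ}), ordered by `≤`. -/
abbrev Horizon : Type := Bool

/-- Blocking relations B ⊆ H × 2^𝓛. -/
abbrev Blocking (Name : Type) : Type := Set (Horizon × Set (Label Name))

/-- Predictions ι : H → 2^𝓛. -/
abbrev Pred (Name : Type) : Type := Horizon → Set (Label Name)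

variable {Name PName : Type}

/-- The induced blocking function [B](C) = { ℓ | ∃(C′,L′) ∈ B, C′ ⊆ C, ℓ ∈ L′ }. -/
def blockSet (B : Blocking Name) (C : Horizon) : Set (Label Name) :=
  { ℓ | ∃ C' L, (C', L) ∈ B ∧ C' ≤ C ∧ ℓ ∈ L }

/-- B′ ⊑ B iff [B′](C) ⊆ [B](C) for all C. -/
def bleq (B' B : Blocking Name) : Prop :=
  ∀ C : Horizon, blockSet B' C ⊆ blockSet B C

/-- ι′ ⊑ ι iff ι′(C) ⊆ ι(C) for all C. -/
def pleq (ι' ι : Pred Name) : Prop :=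
  ∀ C : Horizon, ι' C ⊆ ι C

/-- Pointwise union ι1 + ι2 of predictions. -/
def predAdd (ι1 ι2 : Pred Name) : Pred Name := fun C => ι1 C ∪ ι2 C

/-- The empty prediction ι^∅. -/
def emptyPred : Pred Name := fun _ => ∅

/-- eschews(ι, B): for all (C,L′) ∈ B, ι(C) ∩ {ℓ̄ | ℓ ∈ L′} = ∅. -/
def eschews (ι : Pred Name) (B : Blocking Name) : Prop :=
  ∀ C L, (C, L) ∈ B → ι C ∩ (Label.bar '' L) = ∅

/-- Process terms of single-clock CCSˡᵐ (threads are merged into the process grammar):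
process names, parallel composition, restriction, inactive 0_C, prefix α:L′.P, and sum. -/
inductive Proc (Name PName : Type) : Type
  | name : PName → Proc Name PName
  | par : Proc Name PName → Proc Name PName → Proc Name PName
  | restr : Proc Name PName → Set Name → Proc Name PName
  | nil : Horizon → Proc Name PName
  | pre : Act Name → Set (Label Name) → Proc Name PName → Proc Name PName
  | sum : Proc Name PName → Proc Name PName → Proc Name PName

/-- The labels A′ ∪ Ā′ of a set A′ of channel names. -/
def chanLabels (A : Set Name) : Set (Label Name) :=
  { ℓ | ∃ a ∈ A, ℓ = .pos a ∨ ℓ = .neg a }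

/-- σ ∈ 𝓛(P): the clock occurs free in P (through unfolding of process names). -/
inductive HasClock (env : PName → Proc Name PName) : Proc Name PName → Prop
  | nil : HasClock env (.nil true)
  | preClock (L : Set (Label Name)) (P : Proc Name PName) :
      HasClock env (.pre (.lab .clock) L P)
  | preCont {P : Proc Name PName} (α : Act Name) (L : Set (Label Name)) :
      HasClock env P → HasClock env (.pre α L P)
  | parL {P : Proc Name PName} (Q : Proc Name PName) :
      HasClock env P → HasClock env (.par P Q)
  | parR (P : Proc Name PName) {Q : Proc Name PName} :
      HasClock env Q → HasClock env (.par P Q)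
  | sumL {M : Proc Name PName} (N : Proc Name PName) :
      HasClock env M → HasClock env (.sum M N)
  | sumR (M : Proc Name PName) {N : Proc Name PName} :
      HasClock env N → HasClock env (.sum M N)
  | restr {P : Proc Name PName} (A : Set Name) :
      HasClock env P → HasClock env (.restr P A)
  | name (p : PName) : HasClock env (env p) → HasClock env (.name p)

open Classical in
/-- The clock horizon clk(P) = 𝓛(P) ∩ {σ} ∈ H. -/
noncomputable def clk (env : PName → Proc Name PName) (P : Proc Name PName) : Horizon :=
  if HasClock env P then true else false

/-- Initial actions iA of a thread (as a set of labels; τ contributes nothing to predictions). -/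
def iA : Proc Name PName → Set (Label Name)
  | .pre α _ _ => α.labels
  | .sum M N => iA M ∪ iA N
  | _ => ∅

/-- One level of the bounded syntactic prediction; `rec` handles process names
(it is the bounded prediction at the next-lower unfolding bound). -/
def wilAgo (env : PName → Proc Name PName)
    (rec : Horizon → Proc Name PName → Set (Label Name)) :
    Horizon → Proc Name PName → Set (Label Name)
  | _, .nil _ => ∅
  | C, .pre (.lab .clock) _ P =>
      if C = true then {Label.clock} else insert Label.clock (wilAgo env rec C P)
  | C, .pre α _ P => α.labels ∪ wilAgo env rec C P
  | C, .restr P A => wilAgo env rec C P \ chanLabels A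
  | C, .name p => rec C (env p)
  | C, .par P Q => wilAgo env rec C P ∪ wilAgo env rec C Q
  | C, .sum M N => wilAgo env rec C M ∪ wilAgo env rec C N

/-- The bounded syntactic prediction wilAⁿ_C(P) with at most n unfoldings of process names. -/
def wilA (env : PName → Proc Name PName) : ℕ → Horizon → Proc Name PName → Set (Label Name)
  | 0 => wilAgo env fun _ _ => ∅
  | n + 1 => wilAgo env (wilA env n)

/-- iA*_C(P) = ⋃ₙ wilAⁿ_C(P): the labels occurring syntactically in P before any clock in C. -/
def iAstar (env : PName → Proc Name PName) (C : Horizon) (P : Proc Name PName) :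
    Set (Label Name) :=
  ⋃ n : ℕ, wilA env n C P

/-- The prediction iA*₋(P) : C ↦ iA*_C(P). -/
def iAstarPred (env : PName → Proc Name PName) (P : Proc Name PName) : Pred Name :=
  fun C => iAstar env C P

/-- Restriction B↾A of a blocking relation: remove A ∪ Ā from each entry. -/
def restrB (B : Blocking Name) (A : Set Name) : Blocking Name :=
  { q | ∃ C L, (C, L) ∈ B ∧ q = (C, L \ chanLabels A) }

/-- Restriction ι↾A of a prediction: remove A ∪ Ā pointwise. -/
def restrPred (ι : Pred Name) (A : Set Name) : Pred Name :=
  fun C => ι C \ chanLabels A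

/-- Result ℓ ∥ ℓ̄ of synchronisation: a ∥ ā = τ and σ ∥ σ = σ. -/
def syncAct {Name : Type} : Label Name → Act Name
  | .clock => .lab .clock
  | _ => .tau

/-- The strategic labelled transition system of single-clock CCSˡᵐ (Fig. 1):
P —α:B[ι]→ Q. -/
inductive Step (env : PName → Proc Name PName) :
    Proc Name PName → Act Name → Blocking Name → Pred Name → Proc Name PName → Prop
  | act (α : Act Name) (L : Set (Label Name)) (P : Proc Name PName) :
      Step env (.pre α L P) α {(clk env P, L)} emptyPred P
  | sumL {M : Proc Name PName} {α : Act Name} {B : Blocking Name} {ι : Pred Name}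
      {P : Proc Name PName} (N : Proc Name PName) :
      Step env M α B ι P →
      Step env (.sum M N) α B (fun C => ι C ∪ (iA N \ α.labels)) P
  | sumR (M : Proc Name PName) {N : Proc Name PName} {α : Act Name} {B : Blocking Name}
      {ι : Pred Name} {P : Proc Name PName} :
      Step env N α B ι P →
      Step env (.sum M N) α B (fun C => ι C ∪ (iA M \ α.labels)) P
  | con {p : PName} {α : Act Name} {B : Blocking Name} {ι : Pred Name} {P' : Proc Name PName} :
      Step env (env p) α B ι P' →
      Step env (.name p) α B ι P'
  | com {P1 P2 P1' P2' : Proc Name PName} {ℓ : Label Name} {B1 B2 : Blocking Name}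
      {ι1 ι2 : Pred Name} :
      Step env P1 (.lab ℓ) B1 ι1 P1' →
      Step env P2 (.lab ℓ.bar) B2 ι2 P2' →
      eschews ι1 B2 → eschews ι2 B1 →
      Step env (.par P1 P2) (syncAct ℓ) (B1 ∪ B2) (predAdd ι1 ι2) (.par P1' P2')
  | parL {P : Proc Name PName} {α : Act Name} {B : Blocking Name} {ι : Pred Name}
      {P' : Proc Name PName} (Q : Proc Name PName) :
      Step env P α B ι P' →
      (α = .lab .clock → ¬ HasClock env Q) →
      eschews (iAstarPred env Q) B →
      Step env (.par P Q) α B (predAdd ι (iAstarPred env Q)) (.par P' Q)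
  | parR (P : Proc Name PName) {Q : Proc Name PName} {α : Act Name} {B : Blocking Name}
      {ι : Pred Name} {Q' : Proc Name PName} :
      Step env Q α B ι Q' →
      (α = .lab .clock → ¬ HasClock env P) →
      eschews (iAstarPred env P) B →
      Step env (.par P Q) α B (predAdd ι (iAstarPred env P)) (.par P Q')
  | restr {P : Proc Name PName} {α : Act Name} {B : Blocking Name} {ι : Pred Name}
      {Q : Proc Name PName} (A : Set Name) :
      Step env P α B ι Q →
      (∀ ℓ, α = .lab ℓ → ℓ ∉ chanLabels A) →
      Step env (.restr P A) α (restrB B A) (restrPred ι A) (.restr Q A)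

/-- One strategic step (labels existentially quantified). -/
def Tr (env : PName → Proc Name PName) (P Q : Proc Name PName) : Prop :=
  ∃ α B ι, Step env P α B ι Q

/-- Q is a derivative of P: reachable by strategic transitions. -/
def Deriv (env : PName → Proc Name PName) : Proc Name PName → Proc Name PName → Prop :=
  Relation.ReflTransGen (Tr env)

/-- A congruence on processes: an equivalence compatible with the process operators. -/
structure IsCongruence (cong : Proc Name PName → Proc Name PName → Prop) : Prop where
  equiv : Equivalence cong
  pre : ∀ (α : Act Name) (L : Set (Label Name)) {P P' : Proc Name PName},
      cong P P' → cong (.pre α L P) (.pre α L P')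
  sum : ∀ {M M' N N' : Proc Name PName}, cong M M' → cong N N' → cong (.sum M N) (.sum M' N')
  par : ∀ {P P' Q Q' : Proc Name PName}, cong P P' → cong Q Q' → cong (.par P Q) (.par P' Q')
  restr : ∀ (A : Set Name) {P P' : Proc Name PName}, cong P P' → cong (.restr P A) (.restr P' A)

/-- P is observable (modulo cong). -/
def Observable (env : PName → Proc Name PName)
    (cong : Proc Name PName → Proc Name PName → Prop) (P : Proc Name PName) : Prop :=
  ∀ Q Q1 Q2 α1 α2 B1 B2 ι1 ι2,
    Deriv env P Q →
    Step env Q α1 B1 ι1 Q1 → Step env Q α2 B2 ι2 Q2 →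
    (α1 ≠ α2 ∨ ¬ cong Q1 Q2) →
    ∀ ℓ1 ℓ2 : Label Name, α1 = .lab ℓ1 → α2 = .lab ℓ2 → ℓ1 ∈ ι2 true ∧ ℓ2 ∈ ι1 true

/-- α ∉ [B](⊤). -/
def unblockedBy (α : Act Name) (B : Blocking Name) : Prop :=
  ∀ ℓ : Label Name, α = .lab ℓ → ℓ ∉ blockSet B true

/-- Independence (modulo cong) of two transitions out of the same process. -/
def Independent (cong : Proc Name PName → Proc Name PName → Prop)
    (α1 : Act Name) (B1 : Blocking Name) (Q1 : Proc Name PName)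
    (α2 : Act Name) (B2 : Blocking Name) (Q2 : Proc Name PName) : Prop :=
  (α1 = .lab .clock ∧ α2 = .lab .clock) ∨
  (α1.isRendezvousOrTau ∧ α2.isRendezvousOrTau ∧
    ((¬ (α1 = .tau ∧ α2 = .tau) ∧ unblockedBy α1 B2 ∧ unblockedBy α2 B1) ∨
     (α1 = α2 ∧ ¬ cong Q1 Q2)))

/-- The Diamond Property (CR) of a process Q (modulo cong). -/
def DiamondCR (env : PName → Proc Name PName)
    (cong : Proc Name PName → Proc Name PName → Prop) (Q : Proc Name PName) : Prop :=
  ∀ α1 B1 ι1 Q1 α2 B2 ι2 Q2,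
    Step env Q α1 B1 ι1 Q1 → Step env Q α2 B2 ι2 Q2 →
    Independent cong α1 B1 Q1 α2 B2 Q2 →
    ∃ Q1' Q2' B1' ι1' B2' ι2',
      cong Q1' Q2' ∧
      Step env Q1 α2 B2' ι2' Q1' ∧ Step env Q2 α1 B1' ι1' Q2' ∧
      bleq B1' B1 ∧ bleq B2' B2 ∧
      (α1.isRendezvous → pleq ι1' ι1) ∧ (α2.isRendezvous → pleq ι2' ι2)

/-- P is coherent (modulo cong): observable and every derivative satisfies (CR). -/
def Coherent (env : PName → Proc Name PName)
    (cong : Proc Name PName → Proc Name PName → Prop) (P : Proc Name PName) : Prop :=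
  Observable env cong P ∧ ∀ Q, Deriv env P Q → DiamondCR env cong Q

/-- N is a normal form: no τ-transitions. -/
def NormalForm (env : PName → Proc Name PName) (N : Proc Name PName) : Prop :=
  ∀ B ι N', ¬ Step env N .tau B ι N'

/-- One reduction (τ-labelled) step. -/
def Red (env : PName → Proc Name PName) (P Q : Proc Name PName) : Prop :=
  ∃ B ι, Step env P .tau B ι Q

/-- P ⇓ N: P reduces to the normal form N by finitely many τ-steps. -/
def ReducesTo (env : PName → Proc Name PName) (P N : Proc Name PName) : Prop :=
  Relation.ReflTransGen (Red env) P N ∧ NormalForm env N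

/-- Strong bisimulations for the strategic LTS (matching full strategic labels). -/
def IsStrategicBisim (env : PName → Proc Name PName)
    (R : Proc Name PName → Proc Name PName → Prop) : Prop :=
  ∀ P Q, R P Q →
    (∀ α B ι P', Step env P α B ι P' → ∃ Q', Step env Q α B ι Q' ∧ R P' Q') ∧
    (∀ α B ι Q', Step env Q α B ι Q' → ∃ P', Step env P α B ι P' ∧ R P' Q')

/-- Strong bisimilarity for the strategic LTS. -/
def StrategicBisim (env : PName → Proc Name PName) (P Q : Proc Name PName) : Prop :=
  ∃ R, IsStrategicBisim env R ∧ R P Q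

/-- Milner's CCS labelled transition system P —α→ Q on the same syntax. -/
inductive CCSStep (env : PName → Proc Name PName) :
    Proc Name PName → Act Name → Proc Name PName → Prop
  | act (α : Act Name) (L : Set (Label Name)) (P : Proc Name PName) :
      CCSStep env (.pre α L P) α P
  | sumL {M : Proc Name PName} {α : Act Name} {P : Proc Name PName} (N : Proc Name PName) :
      CCSStep env M α P → CCSStep env (.sum M N) α P
  | sumR (M : Proc Name PName) {N : Proc Name PName} {α : Act Name} {P : Proc Name PName} :
      CCSStep env N α P → CCSStep env (.sum M N) α P
  | con {p : PName} {α : Act Name} {P' : Proc Name PName} :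
      CCSStep env (env p) α P' → CCSStep env (.name p) α P'
  | com {P1 P2 P1' P2' : Proc Name PName} (ℓ : Label Name) :
      CCSStep env P1 (.lab ℓ) P1' → CCSStep env P2 (.lab ℓ.bar) P2' →
      CCSStep env (.par P1 P2) .tau (.par P1' P2')
  | parL {P : Proc Name PName} {α : Act Name} {P' : Proc Name PName} (Q : Proc Name PName) :
      CCSStep env P α P' → CCSStep env (.par P Q) α (.par P' Q)
  | parR (P : Proc Name PName) {Q : Proc Name PName} {α : Act Name} {Q' : Proc Name PName} :
      CCSStep env Q α Q' → CCSStep env (.par P Q) α (.par P Q')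
  | restr {P : Proc Name PName} {α : Act Name} {Q : Proc Name PName} (A : Set Name) :
      CCSStep env P α Q → (∀ ℓ, α = .lab ℓ → ℓ ∉ chanLabels A) →
      CCSStep env (.restr P A) α (.restr Q A)

def CCSTr (env : PName → Proc Name PName) (P Q : Proc Name PName) : Prop :=
  ∃ α, CCSStep env P α Q

def CCSDeriv (env : PName → Proc Name PName) : Proc Name PName → Proc Name PName → Prop :=
  Relation.ReflTransGen (CCSTr env)

/-- Strong bisimulations for Milner's CCS LTS. -/
def IsCCSBisim (env : PName → Proc Name PName)
    (R : Proc Name PName → Proc Name PName → Prop) : Prop :=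
  ∀ P Q, R P Q →
    (∀ α P', CCSStep env P α P' → ∃ Q', CCSStep env Q α Q' ∧ R P' Q') ∧
    (∀ α Q', CCSStep env Q α Q' → ∃ P', CCSStep env P α P' ∧ R P' Q')

/-- Strong bisimilarity ∼ for Milner's CCS. -/
def CCSBisim (env : PName → Proc Name PName) (P Q : Proc Name PName) : Prop :=
  ∃ R, IsCCSBisim env R ∧ R P Q

/-- P is determinate (modulo ∼) in Milner's CCS. -/
def CCSDeterminate (env : PName → Proc Name PName) (P : Proc Name PName) : Prop :=
  ∀ Q, CCSDeriv env P Q → ∀ α Q1 Q2,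
    CCSStep env Q α Q1 → CCSStep env Q α Q2 → CCSBisim env Q1 Q2

/-- P is strongly confluent (modulo ∼) in Milner's CCS. -/
def CCSStronglyConfluent (env : PName → Proc Name PName) (P : Proc Name PName) : Prop :=
  CCSDeterminate env P ∧
  ∀ Q, CCSDeriv env P Q → ∀ α1 α2 Q1 Q2, α1 ≠ α2 →
    CCSStep env Q α1 Q1 → CCSStep env Q α2 Q2 →
    ∃ Q1' Q2', CCSBisim env Q1' Q2' ∧ CCSStep env Q1 α2 Q1' ∧ CCSStep env Q2 α1 Q2'

/-- The clock-free, priority-free fragment: inactive subterms are 0_⊥, no prefix action is σ,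
and all blocking sets are empty. -/
def ClockFree : Proc Name PName → Prop
  | .nil C => C = false
  | .pre α L P => α ≠ .lab .clock ∧ L = ∅ ∧ ClockFree P
  | .sum M N => ClockFree M ∧ ClockFree N
  | .par P Q => ClockFree P ∧ ClockFree Q
  | .restr P _ => ClockFree P
  | .name _ => True

/-- Well-formedness: direct subprocesses of threads have the same clock horizon as the thread. -/
def WF (env : PName → Proc Name PName) : Proc Name PName → Prop
  | .nil _ => True
  | .pre α L P => WF env P ∧ (HasClock env (.pre α L P) ↔ HasClock env P)
  | .sum M N => WF env M ∧ WF env N ∧ (HasClock env M ↔ HasClock env N)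
  | .par P Q => WF env P ∧ WF env Q
  | .restr P _ => WF env P
  | .name _ => True

/-- P has exactly one derivable strategic transition, namely α to Q (with some label B[ι]). -/
def UniqueStep (env : PName → Proc Name PName) (P : Proc Name PName) (α : Act Name)
    (Q : Proc Name PName) : Prop :=
  ∃ B ι, Step env P α B ι Q ∧
    ∀ α' B' ι' Q', Step env P α' B' ι' Q' → α' = α ∧ B' = B ∧ ι' = ι ∧ Q' = Q

end CCSlm

namespace CCSlm

/-- Channel names a, b and r. -/
inductive CH : Type
  | a
  | b
  | r

/-- A single process name S. -/
inductive PN : Type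
  | S

/-- S ≝ r.S. -/
def envR : PN → Proc CH PN := fun _ => .pre (.lab (.pos .r)) ∅ (.name .S)

/-- R1 = r̄.a.0. -/
def R1 : Proc CH PN := .pre (.lab (.neg .r)) ∅ (.pre (.lab (.pos .a)) ∅ (.nil false))

/-- R2 = r̄.b.0. -/
def R2 : Proc CH PN := .pre (.lab (.neg .r)) ∅ (.pre (.lab (.pos .b)) ∅ (.nil false))

/-- P = (R1 ∥ S ∥ R2)↾{r}. -/
def Pbig : Proc CH PN := .restr (.par R1 (.par (.name .S) R2)) {CH.r}

/-- Q1 = (a.0 ∥ S ∥ r̄.b.0)↾{r}. -/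
def Q1 : Proc CH PN :=
  .restr (.par (.pre (.lab (.pos .a)) ∅ (.nil false)) (.par (.name .S) R2)) {CH.r}

/-- Q2 = (r̄.a.0 ∥ S ∥ b.0)↾{r}. -/
def Q2 : Proc CH PN :=
  .restr (.par R1 (.par (.name .S) (.pre (.lab (.pos .b)) ∅ (.nil false)))) {CH.r}

/-!
R1, R2 and S are sequential: every derivative has at most one transition, so determinacy and
the diamond property hold trivially. In P the server S can serve either client first. After
serving R1 the action a is enabled at once, whereas after serving R2 the a of R1 is still
guarded by r̄, so the two τ-derivatives Q1 and Q2 are told apart by a single a-step.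
-/

section General

variable {Name PName : Type} {env : PName → Proc Name PName}

theorem ccsStep_pre_iff {α β : Act Name} {L : Set (Label Name)} {P Q : Proc Name PName} :
    CCSStep env (.pre α L P) β Q ↔ β = α ∧ Q = P := by
  constructor
  · rintro ⟨⟩
    exact ⟨rfl, rfl⟩
  · rintro ⟨rfl, rfl⟩
    exact .act _ _ _

theorem not_ccsStep_nil {C : Horizon} {α : Act Name} {Q : Proc Name PName} :
    ¬ CCSStep env (.nil C) α Q := nofun

theorem ccsBisim_refl (P : Proc Name PName) : CCSBisim env P P :=
  ⟨Eq, fun _ _ hPQ => hPQ ▸ ⟨fun _ P' h => ⟨P', h, rfl⟩, fun _ Q' h => ⟨Q', h, rfl⟩⟩, rfl⟩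

theorem not_ccsBisim_of_step {P Q P' : Proc Name PName} {α : Act Name}
    (hP : CCSStep env P α P') (hQ : ∀ Q', ¬ CCSStep env Q α Q') : ¬ CCSBisim env P Q := by
  rintro ⟨R, hR, hPQ⟩
  obtain ⟨Q', hQ', -⟩ := (hR P Q hPQ).1 α P' hP
  exact hQ Q' hQ'

theorem not_ccsDeterminate_of_steps {P Q1 Q2 : Proc Name PName} {α : Act Name}
    (h1 : CCSStep env P α Q1) (h2 : CCSStep env P α Q2) (hne : ¬ CCSBisim env Q1 Q2) :
    ¬ CCSDeterminate env P :=
  fun hdet => hne (hdet P .refl α Q1 Q2 h1 h2)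

theorem CCSDeriv.mem_of_closed {D : Set (Proc Name PName)} {P Q : Proc Name PName}
    (hD : ∀ Q ∈ D, ∀ α Q', CCSStep env Q α Q' → Q' ∈ D) (hP : P ∈ D)
    (h : CCSDeriv env P Q) : Q ∈ D := by
  induction h with
  | refl => exact hP
  | tail _ hstep ih =>
    obtain ⟨α, hα⟩ := hstep
    exact hD _ ih _ _ hα

def CCSSequential (env : PName → Proc Name PName) (P : Proc Name PName) : Prop :=
  ∀ Q, CCSDeriv env P Q → ∀ α1 α2 Q1 Q2,
    CCSStep env Q α1 Q1 → CCSStep env Q α2 Q2 → α1 = α2 ∧ Q1 = Q2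

theorem CCSSequential.stronglyConfluent {P : Proc Name PName} (hP : CCSSequential env P) :
    CCSStronglyConfluent env P := by
  refine ⟨fun Q hQ α Q1 Q2 h1 h2 => ?_, fun Q hQ α1 α2 Q1 Q2 hne h1 h2 => ?_⟩
  · obtain ⟨-, rfl⟩ := hP Q hQ α α Q1 Q2 h1 h2
    exact ccsBisim_refl Q1
  · exact absurd (hP Q hQ α1 α2 Q1 Q2 h1 h2).1 hne

theorem CCSSequential.of_closed {D : Set (Proc Name PName)} {P : Proc Name PName}
    (hD : ∀ Q ∈ D, ∀ α Q', CCSStep env Q α Q' → Q' ∈ D)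
    (hunique : ∀ Q ∈ D, ∀ α1 α2 Q1 Q2,
      CCSStep env Q α1 Q1 → CCSStep env Q α2 Q2 → α1 = α2 ∧ Q1 = Q2)
    (hP : P ∈ D) : CCSSequential env P :=
  fun Q hQ => hunique Q (hQ.mem_of_closed hD hP)

def Proc.IsPrefixChain : Proc Name PName → Prop
  | .nil _ => True
  | .pre _ _ P => P.IsPrefixChain
  | _ => False

theorem CCSSequential.of_isPrefixChain {P : Proc Name PName} (hP : P.IsPrefixChain) :
    CCSSequential env P := by
  refine .of_closed (D := {Q | Q.IsPrefixChain}) ?_ ?_ hP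
  · rintro (_ | _ | _ | _ | _ | _) hQ β Q' h <;> try exact hQ.elim
    · exact absurd h not_ccsStep_nil
    · rw [(ccsStep_pre_iff.1 h).2]
      exact hQ
  · rintro (_ | _ | _ | _ | _ | _) hQ α1 α2 Q1 Q2 h1 h2 <;> try exact hQ.elim
    · exact absurd h1 not_ccsStep_nil
    · obtain ⟨rfl, rfl⟩ := ccsStep_pre_iff.1 h1
      obtain ⟨rfl, rfl⟩ := ccsStep_pre_iff.1 h2
      exact ⟨rfl, rfl⟩

theorem ccsStep_name_of_env_eq {p : PName} {α β : Act Name} {L : Set (Label Name)}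
    {Q : Proc Name PName} (hp : env p = .pre α L (.name p)) (h : CCSStep env (.name p) β Q) :
    β = α ∧ Q = .name p := by
  cases h with
  | con h => rw [hp] at h; exact ccsStep_pre_iff.1 h

theorem CCSSequential.name_of_env_eq {p : PName} {α : Act Name} {L : Set (Label Name)}
    (hp : env p = .pre α L (.name p)) : CCSSequential env (.name p) := by
  refine .of_closed (D := {.name p}) ?_ ?_ rfl
  · rintro Q rfl β Q' h
    exact (ccsStep_name_of_env_eq hp h).2
  · rintro Q rfl α1 α2 Q1 Q2 h1 h2
    obtain ⟨rfl, rfl⟩ := ccsStep_name_of_env_eq hp h1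
    obtain ⟨rfl, rfl⟩ := ccsStep_name_of_env_eq hp h2
    exact ⟨rfl, rfl⟩

end General

theorem Pbig_tau_Q1 : CCSStep envR Pbig .tau Q1 :=
  .restr _ (.com (.neg .r) (.act _ _ _) (.parL _ (.con (.act _ _ _)))) nofun

theorem Pbig_tau_Q2 : CCSStep envR Pbig .tau Q2 :=
  .restr _ (.parR _ (.com (.pos .r) (.con (.act _ _ _)) (.act _ _ _))) nofun

theorem Q1_step_a :
    CCSStep envR Q1 (.lab (.pos .a)) (.restr (.par (.nil false) (.par (.name .S) R2)) {CH.r}) :=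
  .restr _ (.parL _ (.act _ _ _)) (by rintro ℓ ⟨⟩ ⟨_, rfl, h | h⟩ <;> cases h)

theorem Q2_not_step_a (Q' : Proc CH PN) : ¬ CCSStep envR Q2 (.lab (.pos .a)) Q' := by
  rintro (_ | _ | _ | _ | _ | _ | _ | ⟨_, h, -⟩)
  cases h with
  | parL _ hR1 => cases (ccsStep_pre_iff.1 hR1).1
  | parR _ h =>
    cases h with
    | parL _ hS => cases (ccsStep_name_of_env_eq rfl hS).1
    | parR _ hb => cases (ccsStep_pre_iff.1 hb).1

/-- Strong confluence in Milner's CCS is not preserved by parallel composition with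
restriction: R1, S and R2 are each strongly confluent, but P = (R1 ∥ S ∥ R2)↾{r} is not
strongly confluent and not even determinate modulo strong bisimilarity, having two
τ-transitions to non-bisimilar Q1 and Q2. -/
theorem ccs_strong_confluence_not_compositional :
    CCSStronglyConfluent envR R1 ∧
    CCSStronglyConfluent envR (.name PN.S) ∧
    CCSStronglyConfluent envR R2 ∧
    ¬ CCSStronglyConfluent envR Pbig ∧
    ¬ CCSDeterminate envR Pbig ∧
    CCSStep envR Pbig .tau Q1 ∧
    CCSStep envR Pbig .tau Q2 ∧
    ¬ CCSBisim envR Q1 Q2 := by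
  have hQ : ¬ CCSBisim envR Q1 Q2 := not_ccsBisim_of_step Q1_step_a Q2_not_step_a
  have hdet : ¬ CCSDeterminate envR Pbig := not_ccsDeterminate_of_steps Pbig_tau_Q1 Pbig_tau_Q2 hQ
  exact ⟨CCSSequential.stronglyConfluent (.of_isPrefixChain trivial),
    CCSSequential.stronglyConfluent (.name_of_env_eq rfl),
    CCSSequential.stronglyConfluent (.of_isPrefixChain trivial),
    fun h => hdet h.1, hdet, Pbig_tau_Q1, Pbig_tau_Q2, hQ⟩

end CCSlm
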